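/- Let R be a commutative ring (e.g. R = ℝ) and a₀, a₁, a₂ ∈ R. Let S₂ be the 10×10 matrix over R whose nonzero entries (row, column indices 1..10) are: S₂[1,1] = 2a₀; S₂[2,3] = −a₁; S₂[2,4] = −a₂; S₂[3,1] = a₁; S₂[3,3] = a₀; S₂[4,1] = a₂; S₂[4,4] = a₀; S₂[5,5] = −2a₀; S₂[5,6] = −2a₁; S₂[5,7] = −2a₂; S₂[6,2] = a₁; S₂[6,6] = −a₀; S₂[6,8] = −a₁; S₂[6,9] = −a₂; S₂[7,2] = a₂; S₂[7,7] = −a₀; S₂[7,9] = −a₁; S₂[7,10] = −a₂; S₂[8,3] = 2a₁; S₂[9,3] = a₂; S₂[9,4] = a₁; S₂[10,4] = 2a₂. Let σ be the permutation of {1,…,10} sending (1,2,3,4,5,6,7,8,9,10) to the new ordering (5,6,7,2,8,9,10,3,4,1), and let P be the corresponding permutation matrix. Then P⁻¹ S₂ P is upper triangular with diagonal entries, in order, (−2a₀, −a₀, −a₀, 0, 0, 0, 0, a₀, a₀, 2a₀). -/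

import Mathlib

open Matrix

/-- The `10×10` matrix `S₍₂₎` appearing in the subprincipal operator of the
linearized gauge-fixed Einstein operator on symmetric 2-tensors at the conormal
bundle of the event horizon, for arbitrary parameters `a₀, a₁, a₂`. -/
def kerrS2 (R : Type*) [CommRing R] (a₀ a₁ a₂ : R) :
    Matrix (Fin 10) (Fin 10) R :=
  !![2*a₀, 0, 0, 0, 0, 0, 0, 0, 0, 0;
     0, 0, -a₁, -a₂, 0, 0, 0, 0, 0, 0;
     a₁, 0, a₀, 0, 0, 0, 0, 0, 0, 0;
     a₂, 0, 0, a₀, 0, 0, 0, 0, 0, 0;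
     0, 0, 0, 0, -(2*a₀), -(2*a₁), -(2*a₂), 0, 0, 0;
     0, a₁, 0, 0, 0, -a₀, 0, -a₁, -a₂, 0;
     0, a₂, 0, 0, 0, 0, -a₀, 0, -a₁, -a₂;
     0, 0, 2*a₁, 0, 0, 0, 0, 0, 0, 0;
     0, 0, a₂, a₁, 0, 0, 0, 0, 0, 0;
     0, 0, 0, 2*a₂, 0, 0, 0, 0, 0, 0]

/-- The reordering `(1,…,10) ↦ (5,6,7,2,8,9,10,3,4,1)` of the basis
(0-indexed: `i ↦ σf i`). -/
def kerrS2reorder : Fin 10 → Fin 10 := ![4, 5, 6, 1, 7, 8, 9, 2, 3, 0]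

/-- The permutation matrix corresponding to the reordering
`(1,…,10) ↦ (5,6,7,2,8,9,10,3,4,1)`. -/
def kerrS2perm (R : Type*) [CommRing R] : Matrix (Fin 10) (Fin 10) R :=
  Matrix.of fun i j => if i = kerrS2reorder j then 1 else 0

/-! Listing the basis vectors in the order of the invariant flag
`(f₅, f₆, f₇, f₂, f₈, f₉, f₁₀, f₃, f₄, f₁)` only permutes rows and columns of `S₂`,
and in that order every nonzero entry of `S₂` lies on or above the diagonal. -/

open Equiv

namespace Matrix

theorem of_ite_eq_apply_eq_permMatrix_inv {n R : Type*} [DecidableEq n] [Zero R] [One R]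
    (σ : Perm n) : of (fun i j => if i = σ j then (1 : R) else 0) = σ⁻¹.permMatrix R := by
  ext i j
  simp only [of_apply, PEquiv.toMatrix_apply, toPEquiv_apply, Option.mem_def,
    Option.some.injEq, Perm.eq_inv_iff_eq, eq_comm]

variable {n R : Type*} [Fintype n] [DecidableEq n] [CommRing R]

theorem inv_permMatrix (σ : Perm n) : (σ.permMatrix R)⁻¹ = σ⁻¹.permMatrix R := by
  refine inv_eq_right_inv ?_
  rw [← permMatrix_mul, inv_mul_cancel, permMatrix_one]

theorem permMatrix_inv_conj_eq_submatrix (σ : Perm n) (A : Matrix n n R) :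
    (σ⁻¹.permMatrix R)⁻¹ * A * σ⁻¹.permMatrix R = A.submatrix σ σ := by
  rw [inv_permMatrix, inv_inv, PEquiv.toMatrix_toPEquiv_mul, PEquiv.mul_toMatrix_toPEquiv,
    submatrix_submatrix, Perm.inv_def, symm_symm]
  rfl

end Matrix

noncomputable def kerrS2equiv : Perm (Fin 10) := ofBijective kerrS2reorder (by decide)

theorem kerrS2perm_eq_permMatrix (R : Type*) [CommRing R] :
    kerrS2perm R = kerrS2equiv⁻¹.permMatrix R :=
  of_ite_eq_apply_eq_permMatrix_inv kerrS2equiv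

theorem kerrS2_submatrix_kerrS2reorder (R : Type*) [CommRing R] (a₀ a₁ a₂ : R) :
    (kerrS2 R a₀ a₁ a₂).submatrix kerrS2reorder kerrS2reorder =
      !![-(2*a₀), -(2*a₁), -(2*a₂), 0, 0, 0, 0, 0, 0, 0;
         0, -a₀, 0, a₁, -a₁, -a₂, 0, 0, 0, 0;
         0, 0, -a₀, a₂, 0, -a₁, -a₂, 0, 0, 0;
         0, 0, 0, 0, 0, 0, 0, -a₁, -a₂, 0;
         0, 0, 0, 0, 0, 0, 0, 2*a₁, 0, 0;
         0, 0, 0, 0, 0, 0, 0, a₂, a₁, 0;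
         0, 0, 0, 0, 0, 0, 0, 0, 2*a₂, 0;
         0, 0, 0, 0, 0, 0, 0, a₀, 0, a₁;
         0, 0, 0, 0, 0, 0, 0, 0, a₀, a₂;
         0, 0, 0, 0, 0, 0, 0, 0, 0, 2*a₀] := by
  ext i j
  fin_cases i <;> fin_cases j <;> rfl

/-- Conjugating `S₍₂₎` by the permutation matrix corresponding to the new
ordering `(f₅, f₆, f₇, f₂, f₈, f₉, f₁₀, f₃, f₄, f₁)` yields an upper triangular
matrix with diagonal entries `(−2a₀, −a₀, −a₀, 0, 0, 0, 0, a₀, a₀, 2a₀)`. -/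
theorem kerrS2_triangularization (R : Type*) [CommRing R] (a₀ a₁ a₂ : R) :
    let P := kerrS2perm R
    let T := P⁻¹ * kerrS2 R a₀ a₁ a₂ * P
    T.BlockTriangular (id : Fin 10 → Fin 10) ∧
      Matrix.diag T = ![-(2*a₀), -a₀, -a₀, 0, 0, 0, 0, a₀, a₀, 2*a₀] := by
  intro P T
  have hT : T = (kerrS2 R a₀ a₁ a₂).submatrix kerrS2reorder kerrS2reorder := by
    simp only [T, P, kerrS2perm_eq_permMatrix, permMatrix_inv_conj_eq_submatrix, kerrS2equiv,
      coe_ofBijective]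
  rw [hT, kerrS2_submatrix_kerrS2reorder]
  constructor
  · intro i j hji
    fin_cases i <;> fin_cases j <;> first | exact absurd hji (by decide) | rfl
  · ext i
    fin_cases i <;> rfl
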